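/- arXiv:1310.3537 — 7 statements merged into one kernel-verified Lean document; each statement's English description precedes it below -/
import Mathlib

section
/- Let p be a prime and m ∈ ℕ. For every ε > 0 there exists C ∈ ℕ such that for all ν = (ν₁,ν₂,ν₃,ν₄) ∈ ℕ⁴ with |ν| = ν₁+ν₂+ν₃+ν₄ ≥ C one has |v_p(q^(m)_{ν₁}!·q^(m)_{ν₂}!·q^(m)_{ν₃}!·q^(m)_{ν₄}!) − |ν|/((p−1)p^m)| ≤ ε·|ν|. In other words, v_p(q^(m)_{ν₁}!·q^(m)_{ν₂}!·q^(m)_{ν₃}!·q^(m)_{ν₄}!) is asymptotic to |ν|/((p−1)p^m) as |ν| → ∞. -/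
/-!
STATEMENT 3: Let `p` be a prime and `m : ℕ`. For every `ε > 0` there exists
`C : ℕ` such that for all `ν = (ν₁,ν₂,ν₃,ν₄) ∈ ℕ⁴` with `|ν| ≥ C` one has
`|v_p(q^(m)_{ν₁}!·q^(m)_{ν₂}!·q^(m)_{ν₃}!·q^(m)_{ν₄}!) − |ν|/((p−1)p^m)| ≤ ε·|ν|`;
i.e. `v_p(…)` is asymptotic to `|ν|/((p−1)p^m)` as `|ν| → ∞`.

Here `q^(m)_n = ⌊n/p^m⌋` and `v_p` is the `p`-adic valuation (`padicValNat`).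
-/

/-- `q^(m)_n = ⌊n / p^m⌋`. -/
def qm (p m n : ℕ) : ℕ := n / p ^ m

/-!
By Legendre's formula `(p - 1) v_p(n!) = n - s_p(n)`, where the digit sum `s_p(n)` is at most
`(p - 1)(log_p n + 1)`; hence `v_p(n!) = n / (p - 1) + O(log n)`. Replacing `n` by `⌊ν / p^m⌋`
costs at most `1` more, so each of the four factors contributes `νᵢ / ((p - 1) p^m) + O(log |ν|)`,
and `log |ν| = o(|ν|)`.
-/

open Asymptotics Filter Nat

theorem Nat.digits_sum_le_mul_log_add_one {b : ℕ} (hb : 1 < b) (n : ℕ) :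
    (b.digits n).sum ≤ (b - 1) * (log b n + 1) := by
  have hlen : (b.digits n).length ≤ log b n + 1 :=
    (digits_length_le_iff hb n).2 (lt_pow_succ_log_self hb n)
  have hdigit : ∀ d ∈ b.digits n, d ≤ b - 1 := fun d hd => by
    have := digits_lt_base hb hd
    omega
  calc (b.digits n).sum ≤ (b.digits n).length • (b - 1) := List.sum_le_card_nsmul _ _ hdigit
    _ ≤ (log b n + 1) * (b - 1) := by rw [smul_eq_mul]; gcongr
    _ = (b - 1) * (log b n + 1) := mul_comm _ _

theorem abs_padicValNat_factorial_sub_le (p : ℕ) [hp : Fact p.Prime] (n : ℕ) :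
    |(padicValNat p n ! : ℝ) - n / (p - 1)| ≤ log p n + 1 := by
  have hp1 : (0 : ℝ) < p - 1 := by
    linarith [show (1 : ℝ) < p by exact_mod_cast hp.out.one_lt]
  generalize hs : (p.digits n).sum = s
  have hlegendre : ((p : ℝ) - 1) * padicValNat p n ! = n - s := by
    rw [← Nat.cast_one, ← Nat.cast_sub hp.out.one_le, ← Nat.cast_mul,
      ← Nat.cast_sub (hs ▸ digit_sum_le p n), sub_one_mul_padicValNat_factorial, hs]
  have hdigits : (s : ℝ) ≤ (p - 1) * (log p n + 1) := by
    rw [← Nat.cast_one, ← Nat.cast_sub hp.out.one_le, ← hs]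
    exact_mod_cast digits_sum_le_mul_log_add_one hp.out.one_lt n
  have hval : (padicValNat p n ! : ℝ) - n / (p - 1) = -(s / (p - 1)) := by
    field_simp
    linarith
  rw [hval, abs_neg, abs_of_nonneg (by positivity), div_le_iff₀ hp1]
  linarith

theorem abs_natCast_div_sub_div_le_one {K : Type*} [Field K] [LinearOrder K]
    [IsStrictOrderedRing K] [FloorSemiring K] (k b : ℕ) :
    |((k / b : ℕ) : K) - k / b| ≤ 1 := by
  rw [← floor_div_eq_div (K := K), abs_sub_comm,
    abs_of_nonneg (sub_nonneg.2 (floor_le (by positivity)))]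
  linarith [lt_floor_add_one ((k : K) / b)]

theorem abs_padicValNat_factorial_qm_sub_le (p : ℕ) [hp : Fact p.Prime] (m k : ℕ) :
    |(padicValNat p (qm p m k)! : ℝ) - k / ((p - 1) * p ^ m)| ≤ log p k + 2 := by
  have hp1 : (1 : ℝ) ≤ p - 1 := by
    linarith [show (2 : ℝ) ≤ p by exact_mod_cast hp.out.two_le]
  have hfloor : |(qm p m k : ℝ) / (p - 1) - k / ((p - 1) * p ^ m)| ≤ 1 := by
    have := abs_natCast_div_sub_div_le_one (K := ℝ) k (p ^ m)
    push_cast at this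
    rw [mul_comm, ← div_div, ← sub_div, abs_div, abs_of_pos (a := (p : ℝ) - 1) (by linarith),
      div_le_one (by linarith), qm]
    exact this.trans hp1
  have hlog : (log p (qm p m k) : ℝ) ≤ log p k := by
    exact_mod_cast log_mono_right (Nat.div_le_self _ _)
  calc _ ≤ |(padicValNat p (qm p m k)! : ℝ) - qm p m k / (p - 1)|
        + |(qm p m k : ℝ) / (p - 1) - k / ((p - 1) * p ^ m)| := abs_sub_le _ _ _
    _ ≤ (log p (qm p m k) + 1) + 1 := add_le_add (abs_padicValNat_factorial_sub_le p _) hfloor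
    _ ≤ log p k + 2 := by linarith

theorem isLittleO_natLog_add_const (b : ℕ) (c : ℝ) :
    (fun n : ℕ => (log b n : ℝ) + c) =o[atTop] (fun n : ℕ => (n : ℝ)) := by
  have hlogb : (fun n : ℕ => Real.logb b n) =o[atTop] (fun n : ℕ => (n : ℝ)) :=
    Real.isLittleO_logb_id_atTop.comp_tendsto tendsto_natCast_atTop_atTop
  have hlog : (fun n : ℕ => (log b n : ℝ)) =O[atTop] (fun n : ℕ => Real.logb b n) :=
    IsBigO.of_bound 1 (Eventually.of_forall fun n => by
      have := Real.natLog_le_logb n b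
      rw [Real.norm_of_nonneg (by positivity),
        Real.norm_of_nonneg ((log b n).cast_nonneg.trans this), one_mul]
      exact this)
  exact (hlog.trans_isLittleO hlogb).add
    ((isLittleO_const_id_atTop c).comp_tendsto tendsto_natCast_atTop_atTop)

theorem padicVal_qfac_asymptotic (p : ℕ) [Fact p.Prime] (m : ℕ)
    (ε : ℝ) (hε : 0 < ε) :
    ∃ C : ℕ, ∀ ν₁ ν₂ ν₃ ν₄ : ℕ, C ≤ ν₁ + ν₂ + ν₃ + ν₄ →
      |((padicValNat p ((qm p m ν₁).factorial * (qm p m ν₂).factorial *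
            (qm p m ν₃).factorial * (qm p m ν₄).factorial) : ℕ) : ℝ) -
          ((ν₁ + ν₂ + ν₃ + ν₄ : ℕ) : ℝ) / (((p : ℝ) - 1) * (p : ℝ) ^ m)| ≤
        ε * ((ν₁ + ν₂ + ν₃ + ν₄ : ℕ) : ℝ) := by
  obtain ⟨C, hC⟩ :=
    eventually_atTop.1 ((isLittleO_natLog_add_const p 2).def (c := ε / 4) (by positivity))
  refine ⟨C, fun ν₁ ν₂ ν₃ ν₄ hν => ?_⟩
  have hsmall := hC _ hν
  rw [Real.norm_of_nonneg (by positivity), Real.norm_natCast] at hsmall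
  have herr : ∀ k ≤ ν₁ + ν₂ + ν₃ + ν₄, |(padicValNat p (qm p m k)! : ℝ) - k / ((p - 1) * p ^ m)|
      ≤ ε / 4 * ((ν₁ + ν₂ + ν₃ + ν₄ : ℕ) : ℝ) :=
    fun k hk => (abs_padicValNat_factorial_qm_sub_le p m k).trans (le_trans (by gcongr) hsmall)
  have h₁ := abs_le.1 (herr ν₁ (by omega))
  have h₂ := abs_le.1 (herr ν₂ (by omega))
  have h₃ := abs_le.1 (herr ν₃ (by omega))
  have h₄ := abs_le.1 (herr ν₄ (by omega))
  rw [padicValNat.mul (by positivity) (by positivity),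
    padicValNat.mul (by positivity) (by positivity),
    padicValNat.mul (by positivity) (by positivity), abs_le]
  push_cast at h₁ h₂ h₃ h₄ ⊢
  simp only [add_div]
  constructor <;> linarith
end

section
/- Let p be a prime and m ∈ ℕ. For all i, j ∈ ℕ the rational number ((i+j)!/(i!·j!))·(q^(m)_i!·q^(m)_j!/q^(m)_{i+j}!) lies in ℤ_p; equivalently, v_p(q^(m)_{i+j}!) ≤ v_p((i+j)!) − v_p(i!) − v_p(j!) + v_p(q^(m)_i!) + v_p(q^(m)_j!). -/
open Finset Nat

theorem padicValNat_factorial_div_pow {p : ℕ} [Fact p.Prime] {n b : ℕ} (m : ℕ)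
    (hnb : log p n < b) :
    padicValNat p (n / p ^ m)! = ∑ t ∈ Ico (m + 1) (m + b), n / p ^ t := by
  have hqb : log p (n / p ^ m) < b := (log_mono_right (div_le_self _ _)).trans_lt hnb
  rw [padicValNat_factorial hqb, add_comm m 1, add_comm m b, ← sum_Ico_add]
  refine sum_congr rfl fun t _ => ?_
  rw [Nat.div_div_eq_div_mul, ← pow_add, add_comm m t]

theorem sum_div_add_sum_div_add_sum_div_le {ι : Type*} {s S : Finset ι} (hsS : s ⊆ S)
    (d : ι → ℕ) (i j : ℕ) :
    ∑ t ∈ S, i / d t + ∑ t ∈ S, j / d t + ∑ t ∈ s, (i + j) / d t ≤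
      ∑ t ∈ S, (i + j) / d t + ∑ t ∈ s, i / d t + ∑ t ∈ s, j / d t := by
  classical
  have carry : ∑ t ∈ S \ s, i / d t + ∑ t ∈ S \ s, j / d t ≤ ∑ t ∈ S \ s, (i + j) / d t := by
    rw [← sum_add_distrib]
    exact sum_le_sum fun t _ => Nat.div_add_div_le_add_div
  rw [← sum_sdiff hsS (f := fun t => i / d t), ← sum_sdiff hsS (f := fun t => j / d t),
    ← sum_sdiff hsS (f := fun t => (i + j) / d t)]
  omega

theorem padicValNat_factorial_add_factorial_div_pow_le (p : ℕ) [Fact p.Prime] (m i j : ℕ) :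
    padicValNat p i ! + padicValNat p j ! + padicValNat p ((i + j) / p ^ m)! ≤
      padicValNat p (i + j)! + padicValNat p (i / p ^ m)! + padicValNat p (j / p ^ m)! := by
  set b := log p (i + j) + 1
  have hb : log p (i + j) < b := lt_add_one _
  have hib : log p i < b := (log_mono_right (le_add_right i j)).trans_lt hb
  have hjb : log p j < b := (log_mono_right (le_add_left j i)).trans_lt hb
  rw [padicValNat_factorial (hib.trans_le (le_add_left b m)),
    padicValNat_factorial (hjb.trans_le (le_add_left b m)),
    padicValNat_factorial (hb.trans_le (le_add_left b m)),
    padicValNat_factorial_div_pow m hb, padicValNat_factorial_div_pow m hib,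
    padicValNat_factorial_div_pow m hjb]
  exact sum_div_add_sum_div_add_sum_div_le (Ico_subset_Ico (le_add_left 1 m) le_rfl) _ i j

theorem exists_padicInt_eq_natCast_div {p : ℕ} [Fact p.Prime] {a b : ℕ} (ha : a ≠ 0)
    (hb : b ≠ 0) (hba : padicValNat p b ≤ padicValNat p a) :
    ∃ z : ℤ_[p], (z : ℚ_[p]) = a / b := by
  have hval : 0 ≤ ((a : ℚ_[p]) / b).valuation := by
    rw [div_eq_mul_inv, Padic.valuation_mul (by exact_mod_cast ha) (by simpa using hb),
      Padic.valuation_inv, Padic.valuation_natCast, Padic.valuation_natCast]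
    omega
  exact ⟨⟨a / b, (Padic.norm_le_one_iff_val_nonneg _).2 hval⟩, rfl⟩

theorem qfac_binom_integral (p : ℕ) [Fact p.Prime] (m i j : ℕ) :
    ∃ z : ℤ_[p], (z : ℚ_[p]) =
      (((i + j).factorial : ℚ_[p]) / ((i.factorial : ℚ_[p]) * (j.factorial : ℚ_[p]))) *
        (((qm p m i).factorial : ℚ_[p]) * ((qm p m j).factorial : ℚ_[p]) /
          ((qm p m (i + j)).factorial : ℚ_[p])) := by
  obtain ⟨z, hz⟩ := exists_padicInt_eq_natCast_div (p := p)
    (a := (i + j)! * (qm p m i)! * (qm p m j)!) (b := i ! * j ! * (qm p m (i + j))!)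
    (by positivity) (by positivity) (by
      simp only [padicValNat.mul (factorial_ne_zero _) (factorial_ne_zero _),
        padicValNat.mul (mul_ne_zero (factorial_ne_zero _) (factorial_ne_zero _))
          (factorial_ne_zero _)]
      exact padicValNat_factorial_add_factorial_div_pow_le p m i j)
  refine ⟨z, hz.trans ?_⟩
  push_cast
  ring
end

section
/- Let p be a prime and m ∈ ℕ. For every r ≥ 1 and all i₁, …, i_r ∈ ℕ with i₁ + ⋯ + i_r = d, the rational number (d!/q^(m)_d!)·∏_{j=1}^{r} (q^(m)_{i_j}!/i_j!) lies in ℤ_p; equivalently, ∏_{j=1}^{r} (q^(m)_{i_j}!/i_j!) ∈ (q^(m)_d!/d!)·ℤ_p. -/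
open Finset Nat

theorem Nat.sum_div_le_sum_div {ι : Type*} (s : Finset ι) (f : ι → ℕ) (n : ℕ) :
    ∑ i ∈ s, f i / n ≤ (∑ i ∈ s, f i) / n := by
  classical
  induction s using Finset.induction_on with
  | empty => simp
  | insert a s ha ih =>
    rw [sum_insert ha, sum_insert ha]
    exact (Nat.add_le_add_left ih _).trans Nat.div_add_div_le_add_div

section

variable {p : ℕ} [Fact p.Prime]

theorem padicValNat_factorial_eq_factorial_div_add (n : ℕ) :
    padicValNat p n ! = padicValNat p (n / p)! + n / p := by
  rw [← padicValNat_mul_div_factorial, padicValNat_factorial_mul]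

theorem padicValNat_factorial_eq_factorial_div_pow_add (m n : ℕ) :
    padicValNat p n ! = padicValNat p (n / p ^ m)! + ∑ t ∈ range m, n / p ^ (t + 1) := by
  induction m with
  | zero => simp
  | succ m ih =>
    rw [ih, padicValNat_factorial_eq_factorial_div_add, Nat.div_div_eq_div_mul, ← pow_succ,
      sum_range_succ, add_assoc, add_comm (n / p ^ (m + 1))]

theorem Padic.norm_natCast_eq_norm_p_pow {n : ℕ} (hn : n ≠ 0) :
    ‖(n : ℚ_[p])‖ = ‖(p : ℚ_[p]) ^ padicValNat p n‖ := by
  rw [Padic.norm_eq_zpow_neg_valuation (Nat.cast_ne_zero.2 hn), Padic.valuation_natCast,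
    Padic.norm_p_pow]

theorem Padic.norm_factorial_div_factorial_div_pow (m n : ℕ) :
    ‖(n ! : ℚ_[p]) / (n / p ^ m)!‖ = ‖(p : ℚ_[p]) ^ ∑ t ∈ range m, n / p ^ (t + 1)‖ := by
  rw [norm_div, norm_natCast_eq_norm_p_pow (factorial_ne_zero _),
    norm_natCast_eq_norm_p_pow (factorial_ne_zero _),
    padicValNat_factorial_eq_factorial_div_pow_add m, pow_add, norm_mul,
    mul_div_cancel_left₀ _ (by simp [(Fact.out : p.Prime).ne_zero])]

theorem Padic.norm_p_pow_le_norm_p_pow {a b : ℕ} (hab : a ≤ b) :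
    ‖(p : ℚ_[p]) ^ b‖ ≤ ‖(p : ℚ_[p]) ^ a‖ := by
  rw [Padic.norm_p_pow, Padic.norm_p_pow]
  exact zpow_le_zpow_right₀ (mod_cast (Fact.out : p.Prime).one_le) (by omega)

end

theorem qfac_prod_integral_general (p : ℕ) [Fact p.Prime] (m r d : ℕ)
    (i : Fin r → ℕ) (hd : ∑ j, i j = d) :
    ∃ z : ℤ_[p], (z : ℚ_[p]) =
      ((d.factorial : ℚ_[p]) / ((qm p m d).factorial : ℚ_[p])) *
        ∏ j : Fin r, (((qm p m (i j)).factorial : ℚ_[p]) / ((i j).factorial : ℚ_[p])) := by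
  have hexp : ∑ j, ∑ t ∈ range m, i j / p ^ (t + 1) ≤ ∑ t ∈ range m, d / p ^ (t + 1) := by
    rw [sum_comm, ← hd]
    exact sum_le_sum fun t _ => Nat.sum_div_le_sum_div _ _ _
  have hinv (n : ℕ) : ‖((n / p ^ m)! : ℚ_[p]) / (n ! : ℚ_[p])‖ =
      ‖(p : ℚ_[p]) ^ ∑ t ∈ range m, n / p ^ (t + 1)‖⁻¹ := by
    rw [← inv_div, norm_inv, Padic.norm_factorial_div_factorial_div_pow]
  refine ⟨⟨_, ?_⟩, rfl⟩
  simp only [qm, norm_mul, norm_prod, Padic.norm_factorial_div_factorial_div_pow, hinv]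
  rw [prod_inv_distrib, ← norm_prod, prod_pow_eq_pow_sum, ← div_eq_mul_inv]
  exact div_le_one_of_le₀ (Padic.norm_p_pow_le_norm_p_pow hexp) (norm_nonneg _)

theorem qfac_prod_integral (p : ℕ) [Fact p.Prime] (m r d : ℕ) (hr : 1 ≤ r)
    (i : Fin r → ℕ) (hd : ∑ j, i j = d) :
    ∃ z : ℤ_[p], (z : ℚ_[p]) =
      ((d.factorial : ℚ_[p]) / ((qm p m d).factorial : ℚ_[p])) *
        ∏ j : Fin r, (((qm p m (i j)).factorial : ℚ_[p]) / ((i j).factorial : ℚ_[p])) :=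
  qfac_prod_integral_general p m r d i hd
end

section
/- Every element z of the center of U(𝔤𝔩₂(ℚ_p)) acts on ℚ_p[X] through ρ by a scalar: there exists c ∈ ℚ_p with ρ(z) = c·id. If moreover z lies in the ℤ_p-subalgebra of U(𝔤𝔩₂(ℚ_p)) generated by e, h₁, h₂, f, then c ∈ ℤ_p. -/
/-!
STATEMENT 9: Every element `z` of the center of `U(𝔤𝔩₂(ℚ_p))` acts on
`ℚ_[p][X]` through `ρ` by a scalar: there exists `c ∈ ℚ_[p]` with `ρ(z) = c·id`.
If moreover `z` lies in the `ℤ_[p]`-subalgebra of `U(𝔤𝔩₂(ℚ_p))` generated by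
`e, h₁, h₂, f`, then `c ∈ ℤ_[p]`.

Here `ρ : U(𝔤𝔩₂(ℚ_p)) → End_{ℚ_p}(ℚ_p[X])` is the `ℚ_[p]`-algebra homomorphism
extending the Lie algebra homomorphism with `ρ(e) = ∂`, `ρ(h₁) = −X∂`,
`ρ(h₂) = X∂`, `ρ(f) = −X²∂`.
-/

open UniversalEnvelopingAlgebra

attribute [local instance 100] LieRing.ofAssociativeRing

noncomputable section

/-- `𝔤𝔩₂(ℚ_p)`. -/
abbrev gl2 (p : ℕ) [Fact p.Prime] := Matrix (Fin 2) (Fin 2) ℚ_[p]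

/-- The universal enveloping algebra of `𝔤𝔩₂(ℚ_p)` over `ℚ_[p]`. -/
abbrev Ugl2 (p : ℕ) [Fact p.Prime] := UniversalEnvelopingAlgebra ℚ_[p] (gl2 p)

/-- `e = E₁₂`. -/
def eMat (p : ℕ) [Fact p.Prime] : gl2 p := Matrix.single 0 1 1
/-- `h₁ = E₁₁`. -/
def h1Mat (p : ℕ) [Fact p.Prime] : gl2 p := Matrix.single 0 0 1
/-- `h₂ = E₂₂`. -/
def h2Mat (p : ℕ) [Fact p.Prime] : gl2 p := Matrix.single 1 1 1
/-- `f = E₂₁`. -/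
def fMat (p : ℕ) [Fact p.Prime] : gl2 p := Matrix.single 1 0 1

/-- The images in `U(𝔤)` of the four standard basis elements `e, h₁, h₂, f`. -/
def basisU (p : ℕ) [Fact p.Prime] : Fin 4 → Ugl2 p
  | 0 => ι ℚ_[p] (eMat p)
  | 1 => ι ℚ_[p] (h1Mat p)
  | 2 => ι ℚ_[p] (h2Mat p)
  | 3 => ι ℚ_[p] (fMat p)

/-- The `ℤ_[p]`-subalgebra of `U(𝔤𝔩₂(ℚ_p))` generated by `e, h₁, h₂, f`:
all `ℤ_[p]`-linear combinations of words in `e, h₁, h₂, f`. -/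
def zpSubalg (p : ℕ) [Fact p.Prime] : Set (Ugl2 p) :=
  {u | ∃ (s : Finset (List (Fin 4))) (a : List (Fin 4) → ℤ_[p]),
    u = ∑ w ∈ s, ((a w : ℚ_[p]) • (w.map (basisU p)).prod)}

/-- The derivative `∂ = d/dX` as an endomorphism of `ℚ_[p][X]`. -/
def der (p : ℕ) [Fact p.Prime] : Module.End ℚ_[p] (Polynomial ℚ_[p]) :=
  Polynomial.derivative

/-- Multiplication by `X` as an endomorphism of `ℚ_[p][X]`. -/
def mulX (p : ℕ) [Fact p.Prime] : Module.End ℚ_[p] (Polynomial ℚ_[p]) :=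
  LinearMap.mulLeft ℚ_[p] (Polynomial.X : Polynomial ℚ_[p])

/-! The centre commutes with `ρ(h₂) = X∂`, whose eigenvalues `n` on the lines `ℚ_p·Xⁿ` are
distinct in characteristic zero, so `ρ(z) Xⁿ = cₙ Xⁿ`. It also commutes with `ρ(e)ⁿ = ∂ⁿ`, which
sends `Xⁿ` to `n!`; comparing `∂ⁿ ρ(z) Xⁿ` with `ρ(z) ∂ⁿ Xⁿ` gives `cₙ = c₀`.
For integrality, `ρ(e), ρ(h₁), ρ(h₂), ρ(f)` all preserve the lattice `ℤ_p[X]`, hence so does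
`ρ(z)` for `z` in the `ℤ_p`-span of their words, and `c = ρ(z) 1 ∈ ℤ_p[X] ∩ ℚ_p = ℤ_p`. -/

namespace Polynomial

variable {R : Type*} [CommSemiring R]

theorem coeff_X_mul_derivative (q : R[X]) (n : ℕ) :
    (X * derivative q).coeff n = n * q.coeff n := by
  cases n with
  | zero => simp
  | succ k => rw [coeff_X_mul, coeff_derivative]; push_cast; ring

theorem X_mul_derivative_X_pow (n : ℕ) : X * derivative (X ^ n : R[X]) = n • X ^ n := by
  ext m
  rw [coeff_X_mul_derivative, coeff_smul, coeff_X_pow, nsmul_eq_mul]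
  split_ifs with h <;> simp [h]

variable [IsDomain R] [CharZero R]

theorem eq_smul_X_pow_of_X_mul_derivative_eq {q : R[X]} {n : ℕ}
    (hq : X * derivative q = n • q) : q = q.coeff n • X ^ n := by
  ext m
  rw [coeff_smul, coeff_X_pow, smul_eq_mul, mul_ite, mul_one, mul_zero]
  split_ifs with h
  · rw [h]
  · have hm := congrArg (coeff · m) hq
    rw [coeff_X_mul_derivative, coeff_smul, nsmul_eq_mul] at hm
    exact (mul_eq_mul_right_iff.mp hm).resolve_left (by exact_mod_cast h)

theorem eq_smul_one_of_commute_derivative {T : Module.End R R[X]}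
    (hD : Commute T derivative) (hE : Commute T (LinearMap.mulLeft R X * derivative)) :
    T = (T 1).coeff 0 • 1 := by
  set c : ℕ → R := fun n => (T (X ^ n)).coeff n
  have eigen (n : ℕ) : T (X ^ n) = c n • X ^ n := by
    refine eq_smul_X_pow_of_X_mul_derivative_eq ?_
    have := congrArg (· (X ^ n)) hE.eq
    simp only [Module.End.mul_apply, LinearMap.mulLeft_apply, X_mul_derivative_X_pow,
      map_nsmul] at this
    exact this.symm
  have const (n : ℕ) : c 0 = c n := by
    have := congrArg (· (X ^ n)) (hD.pow_right n).eq
    simp only [Module.End.mul_apply, Module.End.pow_apply, eigen, LinearMap.map_smul_of_tower,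
      iterate_derivative_X_pow_eq_smul, Nat.descFactorial_self, Nat.sub_self] at this
    simpa [mul_comm, Nat.factorial_ne_zero] using congrArg (coeff · 0) this
  refine (basisMonomials R).ext fun n => ?_
  simp only [coe_basisMonomials, monomial_one_right_eq_X_pow, eigen, ← const,
    LinearMap.smul_apply, Module.End.one_apply]
  simp [c]

end Polynomial

open Polynomial

section Integrality

variable (p : ℕ) [Fact p.Prime]

abbrev integralPolynomials : Subalgebra ℤ_[p] ℚ_[p][X] :=
  (mapAlg ℤ_[p] ℚ_[p]).range

def integralPolynomialsStabilizer : Subalgebra ℤ_[p] (Module.End ℚ_[p] ℚ_[p][X]) where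
  carrier := {T | Set.MapsTo T (integralPolynomials p) (integralPolynomials p)}
  mul_mem' hS hT := hS.comp hT
  add_mem' hS hT _ hq := add_mem (hS hq) (hT hq)
  algebraMap_mem' a q hq := by
    rw [Module.algebraMap_end_apply]
    exact Subalgebra.smul_mem _ hq a

theorem der_mem_integralPolynomialsStabilizer : der p ∈ integralPolynomialsStabilizer p := by
  rintro _ ⟨q, rfl⟩
  exact ⟨derivative q, by simp [der, mapAlg_eq_map]⟩

theorem mulX_mem_integralPolynomialsStabilizer : mulX p ∈ integralPolynomialsStabilizer p := by
  intro q hq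
  exact mul_mem (⟨X, by simp [mapAlg_eq_map]⟩ : (X : ℚ_[p][X]) ∈ integralPolynomials p) hq

variable {p} (ρ : Ugl2 p →ₐ[ℚ_[p]] Module.End ℚ_[p] (Polynomial ℚ_[p]))
    (he : ρ (ι ℚ_[p] (eMat p)) = der p)
    (hh1 : ρ (ι ℚ_[p] (h1Mat p)) = -(mulX p * der p))
    (hh2 : ρ (ι ℚ_[p] (h2Mat p)) = mulX p * der p)
    (hf : ρ (ι ℚ_[p] (fMat p)) = -(mulX p ^ 2 * der p))
include he hh1 hh2 hf

theorem map_basisU_mem_integralPolynomialsStabilizer (i : Fin 4) :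
    ρ (basisU p i) ∈ integralPolynomialsStabilizer p := by
  have hD := der_mem_integralPolynomialsStabilizer p
  have hX := mulX_mem_integralPolynomialsStabilizer p
  fin_cases i
  · exact (he ▸ hD : ρ (ι ℚ_[p] (eMat p)) ∈ _)
  · exact (hh1 ▸ neg_mem (mul_mem hX hD) : ρ (ι ℚ_[p] (h1Mat p)) ∈ _)
  · exact (hh2 ▸ mul_mem hX hD : ρ (ι ℚ_[p] (h2Mat p)) ∈ _)
  · exact (hf ▸ neg_mem (mul_mem (pow_mem hX 2) hD) : ρ (ι ℚ_[p] (fMat p)) ∈ _)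

theorem map_mem_integralPolynomialsStabilizer {z : Ugl2 p} (hz : z ∈ zpSubalg p) :
    ρ z ∈ integralPolynomialsStabilizer p := by
  obtain ⟨s, a, rfl⟩ := hz
  rw [map_sum]
  refine sum_mem fun w _ => ?_
  rw [map_smul, ← PadicInt.algebraMap_apply, algebraMap_smul, map_list_prod, List.map_map]
  refine Subalgebra.smul_mem _ (Subalgebra.list_prod_mem _ fun T hT => ?_) _
  obtain ⟨i, -, rfl⟩ := List.mem_map.mp hT
  exact map_basisU_mem_integralPolynomialsStabilizer ρ he hh1 hh2 hf i

end Integrality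

theorem rho_center_scalar (p : ℕ) [Fact p.Prime]
    (ρ : Ugl2 p →ₐ[ℚ_[p]] Module.End ℚ_[p] (Polynomial ℚ_[p]))
    (he : ρ (ι ℚ_[p] (eMat p)) = der p)
    (hh1 : ρ (ι ℚ_[p] (h1Mat p)) = -(mulX p * der p))
    (hh2 : ρ (ι ℚ_[p] (h2Mat p)) = mulX p * der p)
    (hf : ρ (ι ℚ_[p] (fMat p)) = -(mulX p ^ 2 * der p)) :
    ∀ z ∈ Subalgebra.center ℚ_[p] (Ugl2 p),
      ∃ c : ℚ_[p], ρ z = c • (1 : Module.End ℚ_[p] (Polynomial ℚ_[p])) ∧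
        (z ∈ zpSubalg p → ∃ y : ℤ_[p], (y : ℚ_[p]) = c) := by
  intro z hz
  have hcomm (u : Ugl2 p) : Commute (ρ z) (ρ u) :=
    Commute.map (Subalgebra.mem_center_iff.mp hz u).symm ρ
  have hscalar := eq_smul_one_of_commute_derivative (he ▸ hcomm _) (hh2 ▸ hcomm _)
  refine ⟨_, hscalar, fun hzp => ?_⟩
  obtain ⟨q, hq⟩ := map_mem_integralPolynomialsStabilizer ρ he hh1 hh2 hf hzp
    (one_mem (integralPolynomials p))
  refine ⟨q.coeff 0, ?_⟩
  rw [← hq]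
  simp [mapAlg_eq_map]

end
end

section
/- Let p be a prime and n, d ∈ ℕ, and let c = ⌈d(p−1)/(p+1)⌉ be the smallest integer ≥ d(p−1)/(p+1). Then: (i) for every g ∈ ℤ_p[X] with deg g ≤ 2d, the polynomial p^{nd}·g lies in S_{n,d}; and (ii) every f ∈ S_{n,d} is divisible by p^{nc}, i.e. f = p^{nc}·g for some g ∈ ℤ_p[X] with deg g ≤ 2d. -/
/-!
STATEMENT 12: Let `p` be a prime, `n, d : ℕ`, and `c = ⌈d(p−1)/(p+1)⌉`. Then:
(i) for every `g ∈ ℤ_[p][X]` with `deg g ≤ 2d`, the polynomial `p^{nd}·g` lies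
in `S_{n,d}`; and (ii) every `f ∈ S_{n,d}` is divisible by `p^{nc}`, i.e.
`f = p^{nc}·g` for some `g ∈ ℤ_[p][X]` with `deg g ≤ 2d`.

Here `S_{n,d} = { f ∈ ℤ_[p][X] : deg f ≤ 2d, and for every a ∈ ℤ_[p] both f and
its degree-2d reversal f̃ lie in the ideal (X−a, p^n)^d }`, where the reversal
is `Polynomial.reflect (2d)`.
-/

open Polynomial

noncomputable section

/-- `S_{n,d}`: polynomials `f ∈ ℤ_[p][X]` of degree `≤ 2d` such that for every
`a ∈ ℤ_[p]` both `f` and its degree-`2d` reversal lie in `(X − a, p^n)^d`. -/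
def Snd (p : ℕ) [Fact p.Prime] (n d : ℕ) : Set (Polynomial ℤ_[p]) :=
  {f | f.natDegree ≤ 2 * d ∧ ∀ a : ℤ_[p],
    f ∈ (Ideal.span {X - C a, C ((p : ℤ_[p]) ^ n)}) ^ d ∧
    f.reflect (2 * d) ∈ (Ideal.span {X - C a, C ((p : ℤ_[p]) ^ n)}) ^ d}

set_option maxHeartbeats 1000000 in
lemma SndAux.span_pair_pow_le {R : Type*} [CommRing R] (u v : R) (d : ℕ) :
    (Ideal.span {u, v}) ^ d ≤ Ideal.span ((fun i : ℕ => u ^ i * v ^ (d - i)) '' Set.Iic d) := by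
  induction d with
  | zero =>
    have h1 : (1 : R) ∈ Ideal.span ((fun i : ℕ => u ^ i * v ^ (0 - i)) '' Set.Iic 0) :=
      Ideal.subset_span ⟨0, by simp, by simp⟩
    rw [pow_zero, Ideal.one_eq_top, (Ideal.eq_top_iff_one _).mpr h1]
  | succ d ih =>
    rw [pow_succ]
    refine le_trans (Ideal.mul_mono_left ih) ?_
    rw [Ideal.span_mul_span', Ideal.span_le]
    rintro x hx
    rw [Set.mem_mul] at hx
    obtain ⟨y, hy, z, hz, rfl⟩ := hx
    obtain ⟨i, hi, rfl⟩ := hy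
    simp only [Set.mem_Iic] at hi
    rcases hz with rfl | rfl
    · refine Ideal.subset_span ⟨i + 1, Set.mem_Iic.mpr (by omega), ?_⟩
      have h2 : d + 1 - (i + 1) = d - i := by omega
      simp only [h2]; ring
    · refine Ideal.subset_span ⟨i, Set.mem_Iic.mpr (by omega), ?_⟩
      have h2 : d + 1 - i = (d - i) + 1 := by omega
      simp only [h2, pow_succ]; ring

namespace SndAux

variable {p : ℕ} [Fact p.Prime]

lemma prime_C_p : Prime (C (p : ℤ_[p]) : Polynomial ℤ_[p]) :=
  Polynomial.prime_C_iff.mpr (PadicInt.prime_p)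

lemma not_C_p_dvd_pow_X_sub_C (a : ℤ_[p]) (r : ℕ) :
    ¬ (C (p : ℤ_[p]) ∣ (X - C a) ^ r) := by
  intro h
  have h1 : C (p : ℤ_[p]) ∣ (X - C a) := prime_C_p.dvd_of_dvd_pow h
  rw [Polynomial.C_dvd_iff_dvd_coeff] at h1
  have h2 := h1 1
  simp only [coeff_sub, coeff_X_one, coeff_C, if_neg one_ne_zero, sub_zero] at h2
  exact prime_C_p.not_unit (isUnit_C.mpr (isUnit_of_dvd_one h2))

/-- cancellation: `C(p^m) ∣ q * (X-a)^r` implies `C(p^m) ∣ q`. -/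
lemma cancel_monic {q : Polynomial ℤ_[p]} {a : ℤ_[p]} {r m : ℕ}
    (h : C ((p : ℤ_[p]) ^ m) ∣ q * (X - C a) ^ r) : C ((p : ℤ_[p]) ^ m) ∣ q := by
  rw [map_pow] at h ⊢
  exact prime_C_p.pow_dvd_of_dvd_mul_right m (not_C_p_dvd_pow_X_sub_C a r) h

lemma step_dvd {f g : Polynomial ℤ_[p]} {a : ℤ_[p]} {m r : ℕ}
    (hfg : f = C ((p : ℤ_[p]) ^ m) * g)
    (hmem : f ∈ Ideal.span {(X - C a) ^ r, C ((p : ℤ_[p]) ^ (m + 1))}) :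
    (X - C (PadicInt.toZMod a)) ^ r ∣ g.map (PadicInt.toZMod) := by
  obtain ⟨q, h2, hqh⟩ := Ideal.mem_span_pair.mp hmem
  have hCp : C ((p : ℤ_[p]) ^ (m + 1)) = C ((p : ℤ_[p]) ^ m) * C (p : ℤ_[p]) := by
    rw [← map_mul, pow_succ]
  have hd : C ((p : ℤ_[p]) ^ m) ∣ q * (X - C a) ^ r := by
    refine ⟨g - h2 * C (p : ℤ_[p]), ?_⟩
    have : q * (X - C a) ^ r = f - h2 * C ((p : ℤ_[p]) ^ (m + 1)) := by
      rw [← hqh]; ring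
    rw [this, hfg, hCp]; ring
  obtain ⟨q', hq'⟩ := cancel_monic hd
  have hCm : (C ((p : ℤ_[p]) ^ m) : Polynomial ℤ_[p]) ≠ 0 :=
    Polynomial.C_ne_zero.mpr (pow_ne_zero m PadicInt.prime_p.ne_zero)
  have hg : g = q' * (X - C a) ^ r + h2 * C (p : ℤ_[p]) := by
    apply mul_left_cancel₀ hCm
    rw [← hfg, ← hqh, hq', hCp]; ring
  have hmap : g.map (PadicInt.toZMod) =
      (q'.map PadicInt.toZMod) * (X - C (PadicInt.toZMod a)) ^ r := by
    rw [hg, Polynomial.map_add, Polynomial.map_mul, Polynomial.map_mul, Polynomial.map_pow,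
      Polynomial.map_sub, map_X, map_C, map_C]
    have : (PadicInt.toZMod (p : ℤ_[p]) : ZMod p) = 0 := by
      rw [map_natCast, ZMod.natCast_self]
    rw [this, map_zero, mul_zero, add_zero]
  exact ⟨q'.map PadicInt.toZMod, by rw [hmap]; ring⟩

/-- `(X - a, p^n)^d ⊆ ((X-a)^r, p^(m+1))` under suitable numeric hypotheses. -/
lemma mem_J {f : Polynomial ℤ_[p]} {a : ℤ_[p]} {n d m r : ℕ}
    (hf : f ∈ (Ideal.span {X - C a, C ((p : ℤ_[p]) ^ n)}) ^ d)
    (hr : ∀ i, i < r → m + 1 ≤ n * (d - i)) :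
    f ∈ Ideal.span {(X - C a) ^ r, C ((p : ℤ_[p]) ^ (m + 1))} := by
  have h1 := SndAux.span_pair_pow_le (X - C a) (C ((p : ℤ_[p]) ^ n)) d hf
  refine Ideal.span_le.mpr ?_ h1
  rintro x ⟨i, hi, rfl⟩
  simp only [Set.mem_Iic] at hi
  dsimp only
  by_cases hir : r ≤ i
  · have : (X - C a) ^ i = (X - C a) ^ r * (X - C a) ^ (i - r) := by
      rw [← pow_add]; congr 1; omega
    rw [this]
    exact Ideal.mul_mem_right _ _ (Ideal.mul_mem_right _ _
      (Ideal.subset_span (Set.mem_insert _ _)))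
  · have hmi : m + 1 ≤ n * (d - i) := hr i (by omega)
    have he : n * (d - i) = (m + 1) + (n * (d - i) - (m + 1)) := by omega
    have : (C ((p : ℤ_[p]) ^ n) : Polynomial ℤ_[p]) ^ (d - i)
        = C ((p : ℤ_[p]) ^ (m + 1)) * C ((p : ℤ_[p]) ^ (n * (d - i) - (m + 1))) := by
      conv_lhs => rw [← map_pow, ← pow_mul, he]
      rw [pow_add, map_mul]
    rw [this]
    refine Ideal.mul_mem_left _ _ ?_
    exact Ideal.mul_mem_right _ _
      (Ideal.subset_span (Set.mem_insert_iff.mpr (Or.inr rfl)))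

lemma reflect_map' {S : Type*} [CommRing S] (φ : ℤ_[p] →+* S) (g : Polynomial ℤ_[p]) (N : ℕ) :
    (g.map φ).reflect N = (g.reflect N).map φ := by
  ext i
  simp [coeff_reflect, coeff_map]

end SndAux

set_option maxHeartbeats 2000000 in
theorem Snd_bounds (p : ℕ) [Fact p.Prime] (n d : ℕ) (c : ℕ)
    (hc : (c : ℤ) = ⌈((d : ℚ) * ((p : ℚ) - 1)) / ((p : ℚ) + 1)⌉) :
    (∀ g : Polynomial ℤ_[p], g.natDegree ≤ 2 * d →
      (p : ℤ_[p]) ^ (n * d) • g ∈ Snd p n d) ∧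
    (∀ f ∈ Snd p n d, ∃ g : Polynomial ℤ_[p],
      g.natDegree ≤ 2 * d ∧ f = (p : ℤ_[p]) ^ (n * c) • g) := by
  have hp2 : 2 ≤ p := (Fact.out : p.Prime).two_le
  have hppos : (0 : ℚ) < (p : ℚ) + 1 := by positivity
  have hcd : c ≤ d := by
    have h1 : (c : ℤ) ≤ (d : ℤ) := by
      rw [hc]
      refine Int.ceil_le.mpr ?_
      rw [div_le_iff₀ hppos]
      push_cast
      nlinarith [show (0 : ℚ) ≤ (d : ℚ) by positivity]
    exact_mod_cast h1
  constructor
  · -- part (i)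
    intro g hg
    refine ⟨le_trans (natDegree_smul_le _ _) hg, fun a => ?_⟩
    have h0 : (C ((p : ℤ_[p]) ^ n) : Polynomial ℤ_[p])
        ∈ Ideal.span {X - C a, C ((p : ℤ_[p]) ^ n)} :=
      Ideal.subset_span (Set.mem_insert_iff.mpr (Or.inr rfl))
    have hmem := Ideal.pow_mem_pow h0 d
    have hCeq : (C ((p : ℤ_[p]) ^ (n * d)) : Polynomial ℤ_[p])
        = (C ((p : ℤ_[p]) ^ n)) ^ d := by
      rw [← map_pow, ← pow_mul]
    constructor
    · rw [smul_eq_C_mul, hCeq]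
      exact Ideal.mul_mem_right _ _ hmem
    · rw [smul_eq_C_mul, reflect_C_mul, hCeq]
      exact Ideal.mul_mem_right _ _ hmem
  · -- part (ii)
    intro f hf
    -- key step: upgrade divisibility by p^m to p^(m+1) as long as m < n*c
    have key : ∀ m : ℕ, m < n * c → C ((p : ℤ_[p]) ^ m) ∣ f →
        C ((p : ℤ_[p]) ^ (m + 1)) ∣ f := by
      intro m hm hdvd
      by_contra hcon
      have hn : 0 < n := by
        rcases Nat.eq_zero_or_pos n with h | h
        · rw [h, Nat.zero_mul] at hm; exact absurd hm (Nat.not_lt_zero m)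
        · exact h
      obtain ⟨q, hqdef⟩ : ∃ q, m / n = q := ⟨_, rfl⟩
      have hqc : q < c := by
        rw [← hqdef]
        exact (Nat.div_lt_iff_lt_mul hn).mpr (by rwa [Nat.mul_comm] at hm)
      obtain ⟨r, hrdef⟩ : ∃ r, d - q = r := ⟨_, rfl⟩
      have hrd : r ≤ d := by omega
      obtain ⟨g, hg⟩ := hdvd
      have hgne : ¬ (C (p : ℤ_[p]) ∣ g) := by
        rintro ⟨g', hg'⟩
        refine hcon ⟨g', ?_⟩
        rw [hg, hg', pow_succ, map_mul]
        ring
      set gb := g.map (PadicInt.toZMod (p := p)) with hgbdef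
      have hgbne : gb ≠ 0 := by
        intro h0
        apply hgne
        rw [Polynomial.C_dvd_iff_dvd_coeff]
        intro i
        have h1 : PadicInt.toZMod (g.coeff i) = 0 := by
          have := congrArg (fun q => Polynomial.coeff q i) h0
          simpa [hgbdef, coeff_map] using this
        have h2 : g.coeff i ∈ RingHom.ker (PadicInt.toZMod (p := p)) := h1
        rwa [PadicInt.ker_toZMod, PadicInt.maximalIdeal_eq_span_p,
          Ideal.mem_span_singleton] at h2
      -- J-membership
      have hJ : ∀ a : ℤ_[p], ∀ F : Polynomial ℤ_[p],
          F ∈ (Ideal.span {X - C a, C ((p : ℤ_[p]) ^ n)}) ^ d →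
          F ∈ Ideal.span {(X - C a) ^ r, C ((p : ℤ_[p]) ^ (m + 1))} := by
        intro a F hF
        refine SndAux.mem_J hF ?_
        intro i hi
        have h1 : q + 1 ≤ d - i := by omega
        have h2 : m < q * n + n := by
          rw [← hqdef]; exact Nat.lt_div_mul_add hn
        calc m + 1 ≤ q * n + n := Nat.succ_le_of_lt h2
          _ = n * (q + 1) := by ring
          _ ≤ n * (d - i) := Nat.mul_le_mul_left n h1
      -- finite points: high-order vanishing of gb at every z : ZMod p
      have hroot : ∀ z : ZMod p, (X - C z) ^ r ∣ gb := by
        intro z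
        have ha : PadicInt.toZMod ((z.val : ℤ_[p])) = z := by
          rw [map_natCast]
          simp [ZMod.natCast_val, ZMod.cast_id]
        have h1 := (hf.2 ((z.val : ℤ_[p]))).1
        have h2 := SndAux.step_dvd hg (hJ _ _ h1)
        rwa [ha] at h2
      -- infinity: X^r divides the reflection of gb
      have hinf : (X : Polynomial (ZMod p)) ^ r ∣ gb.reflect (2 * d) := by
        have h1 := (hf.2 0).2
        have hrefl : f.reflect (2 * d) = C ((p : ℤ_[p]) ^ m) * (g.reflect (2 * d)) := by
          rw [hg, reflect_C_mul]
        have h2 := SndAux.step_dvd hrefl (hJ 0 _ h1)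
        rw [map_zero, C_0, sub_zero] at h2
        rwa [hgbdef, SndAux.reflect_map']
      -- degree bounds
      have hfne : f ≠ 0 := fun h0 => hcon (h0 ▸ dvd_zero _)
      have hdegg : g.natDegree ≤ 2 * d := by
        have h1 := hf.1
        rwa [hg, Polynomial.natDegree_C_mul
          (pow_ne_zero m PadicInt.prime_p.ne_zero)] at h1
      have hdeggb : gb.natDegree ≤ 2 * d := le_trans natDegree_map_le hdegg
      have hdeggb2 : gb.natDegree ≤ 2 * d - r := by
        rw [Polynomial.natDegree_le_iff_coeff_eq_zero]
        intro k hk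
        by_cases hk2 : k ≤ 2 * d
        · have hj : 2 * d - k < r := by omega
          have h1 := Polynomial.X_pow_dvd_iff.mp hinf (2 * d - k) hj
          rwa [coeff_reflect, revAt_le (by omega),
            show 2 * d - (2 * d - k) = k by omega] at h1
        · exact coeff_eq_zero_of_natDegree_lt (by omega)
      -- counting roots
      have hcount : p * r ≤ Multiset.card gb.roots := by
        have h1 : ∀ z : ZMod p, r ≤ gb.roots.count z := fun z => by
          rw [Polynomial.count_roots]
          exact (Polynomial.le_rootMultiplicity_iff hgbne).mpr (hroot z)
        calc p * r = ∑ _z : ZMod p, r := by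
              rw [Finset.sum_const, Finset.card_univ, ZMod.card, smul_eq_mul]
          _ ≤ ∑ z : ZMod p, gb.roots.count z := Finset.sum_le_sum fun z _ => h1 z
          _ = ∑ z ∈ gb.roots.toFinset, gb.roots.count z :=
              (Finset.sum_subset (Finset.subset_univ _) (fun x _ hx =>
                Multiset.count_eq_zero.mpr
                  (fun h => hx (Multiset.mem_toFinset.mpr h)))).symm
          _ = Multiset.card gb.roots := Multiset.toFinset_sum_count_eq _
      have hcard := Polynomial.card_roots' gb
      have h3 : p * r ≤ 2 * d - r := le_trans hcount (le_trans hcard hdeggb2)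
      have hsum : p * r + r ≤ 2 * d := (Nat.le_sub_iff_add_le (by omega)).mp h3
      -- arithmetic contradiction
      have hq2 : (c : ℤ) ≤ (q : ℤ) := by
        rw [hc]
        refine Int.ceil_le.mpr ?_
        rw [div_le_iff₀ hppos]
        have h4 : (p : ℚ) * r + r ≤ 2 * d := by exact_mod_cast hsum
        have h5 : (r : ℚ) = (d : ℚ) - (q : ℚ) := by
          rw [← hrdef]
          push_cast [Nat.cast_sub (by omega : q ≤ d)]
          ring
        push_cast
        nlinarith [h4, h5]
      have : c ≤ q := by exact_mod_cast hq2
      omega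
    have hall : ∀ k : ℕ, k ≤ n * c → C ((p : ℤ_[p]) ^ k) ∣ f := by
      intro k
      induction k with
      | zero => intro _; simpa using dvd_refl f
      | succ k ih => intro hk; exact key k (by omega) (ih (by omega))
    obtain ⟨g, hg⟩ := hall (n * c) le_rfl
    refine ⟨g, ?_, by rw [smul_eq_C_mul, ← hg]⟩
    rcases eq_or_ne g 0 with rfl | hgne
    · simp
    · have h1 := hf.1
      rwa [hg, Polynomial.natDegree_C_mul
        (pow_ne_zero _ PadicInt.prime_p.ne_zero)] at h1

end
end

section
/- Let p be a prime and n ∈ ℕ. For d = 1 one has the equality S_{n,1} = p^n·{ g ∈ ℤ_p[X] : deg g ≤ 2 }: a polynomial f ∈ ℤ_p[X] of degree ≤ 2 satisfies f ∈ (X−a, p^n) and f̃ ∈ (X−a, p^n) for all a ∈ ℤ_p if and only if all coefficients of f are divisible by p^n. -/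
/-!
STATEMENT 13: Let `p` be a prime and `n : ℕ`. For `d = 1` one has
`S_{n,1} = p^n·{ g ∈ ℤ_[p][X] : deg g ≤ 2 }`: a polynomial `f ∈ ℤ_[p][X]` of
degree `≤ 2` satisfies `f ∈ (X−a, p^n)` and `f̃ ∈ (X−a, p^n)` for all `a ∈ ℤ_[p]`
if and only if all coefficients of `f` are divisible by `p^n`.

Here `f̃ = Polynomial.reflect 2 f` is the degree-2 reversal of `f`.
-/

open Polynomial

theorem Snd_one_eq (p : ℕ) [Fact p.Prime] (n : ℕ)
    (f : Polynomial ℤ_[p]) (hf : f.natDegree ≤ 2) :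
    ((∀ a : ℤ_[p],
        f ∈ Ideal.span {X - C a, C ((p : ℤ_[p]) ^ n)} ∧
        f.reflect 2 ∈ Ideal.span {X - C a, C ((p : ℤ_[p]) ^ n)}) ↔
      (∀ i : ℕ, (p : ℤ_[p]) ^ n ∣ f.coeff i)) := by
  constructor
  · intro h
    have key : ∀ a : ℤ_[p], ∀ g : Polynomial ℤ_[p],
        g ∈ Ideal.span {X - C a, C ((p : ℤ_[p]) ^ n)} → (p : ℤ_[p]) ^ n ∣ g.eval a := by
      intro a g hg
      rw [Ideal.mem_span_pair] at hg
      obtain ⟨u, v, huv⟩ := hg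
      have h2 := congrArg (Polynomial.eval a) huv
      simp only [eval_add, eval_mul, eval_sub, eval_X, eval_C, sub_self, mul_zero,
        zero_add] at h2
      exact Dvd.intro_left _ h2
    have h0 : (p : ℤ_[p]) ^ n ∣ f.coeff 0 := by
      have := key 0 f (h 0).1
      rwa [coeff_zero_eq_eval_zero]
    have h2 : (p : ℤ_[p]) ^ n ∣ f.coeff 2 := by
      have := key 0 (f.reflect 2) (h 0).2
      rw [← coeff_zero_eq_eval_zero, coeff_reflect] at this
      simpa using this
    have heval1 : f.eval 1 = f.coeff 0 + f.coeff 1 + f.coeff 2 := by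
      rw [eval_eq_sum_range' (Nat.lt_succ_of_le hf)]
      simp [Finset.sum_range_succ]
    have h1 : (p : ℤ_[p]) ^ n ∣ f.coeff 1 := by
      have hs := key 1 f (h 1).1
      rw [heval1] at hs
      have : f.coeff 1 = (f.coeff 0 + f.coeff 1 + f.coeff 2) - f.coeff 0 - f.coeff 2 := by
        ring
      rw [this]
      exact dvd_sub (dvd_sub hs h0) h2
    intro i
    match i with
    | 0 => exact h0
    | 1 => exact h1
    | 2 => exact h2
    | (k+3) =>
      have : f.coeff (k+3) = 0 :=
        coeff_eq_zero_of_natDegree_lt (lt_of_le_of_lt hf (by omega))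
      simp [this]
  · intro h a
    have hc : ∀ g : Polynomial ℤ_[p],
        (∀ i, (p : ℤ_[p]) ^ n ∣ g.coeff i) →
        g ∈ Ideal.span {X - C a, C ((p : ℤ_[p]) ^ n)} := by
      intro g hg
      obtain ⟨q, hq⟩ := (C_dvd_iff_dvd_coeff _ _).2 hg
      rw [Ideal.mem_span_pair]
      exact ⟨0, q, by rw [hq]; ring⟩
    refine ⟨hc f h, hc (f.reflect 2) ?_⟩
    intro i
    rw [coeff_reflect]
    exact h _
end

section
/- Let p be a prime and k ≥ 1. The polynomial p^{k(p−1)}·(X^p − X)^k lies in S_{1,kp}; in particular, for every a ∈ ℤ_p one has p^{k(p−1)}·(X^p − X)^k ∈ (X−a, p)^{kp} in ℤ_p[X]. (Consequently the exponent nc in the inclusion S_{n,d} ⊆ p^{nc}·{deg ≤ 2d} cannot in general be improved beyond kp·(p−1)/p when n = 1, d = kp.) -/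
/-!
STATEMENT 14: Let `p` be a prime and `k ≥ 1`. The polynomial
`p^{k(p−1)}·(X^p − X)^k` lies in `S_{1,kp}`; in particular, for every `a ∈ ℤ_[p]`
one has `p^{k(p−1)}·(X^p − X)^k ∈ (X−a, p)^{kp}` in `ℤ_[p][X]`.

Here `S_{n,d} = { f ∈ ℤ_[p][X] : deg f ≤ 2d, and for every a ∈ ℤ_[p] both f and
its degree-2d reversal f̃ = Polynomial.reflect (2d) f lie in the ideal
(X−a, p^n)^d }`.
-/

open Polynomial

noncomputable section

section Aux

variable {p : ℕ} [hp : Fact p.Prime]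

/-- Frobenius decomposition: `X^p − X = (X−a)^p − (X−a) + p·h`. -/
lemma frob_decomp (a : ℤ_[p]) :
    ∃ h : Polynomial ℤ_[p], (X : Polynomial ℤ_[p]) ^ p - X
      = (X - C a) ^ p - (X - C a) + C (p : ℤ_[p]) * h := by
  have hker : ((X : Polynomial ℤ_[p]) ^ p - X - ((X - C a) ^ p - (X - C a)))
      ∈ RingHom.ker (mapRingHom (PadicInt.toZMod (p := p))) := by
    rw [RingHom.mem_ker]
    simp only [coe_mapRingHom, Polynomial.map_sub, Polynomial.map_pow, Polynomial.map_X,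
      map_C]
    rw [sub_pow_char, ← map_pow, ZMod.pow_card]
    ring
  rw [Polynomial.ker_mapRingHom, PadicInt.ker_toZMod, PadicInt.maximalIdeal_eq_span_p,
      Ideal.map_span, Set.image_singleton, Ideal.mem_span_singleton] at hker
  obtain ⟨h, hh⟩ := hker
  exact ⟨h, by linear_combination hh⟩

lemma key (a : ℤ_[p]) :
    (p : ℤ_[p]) ^ (p - 1) • ((X : Polynomial ℤ_[p]) ^ p - X)
      ∈ (Ideal.span {X - C a, C ((p : ℤ_[p]) ^ 1)}) ^ p := by
  set I : Ideal (Polynomial ℤ_[p]) := Ideal.span {X - C a, C ((p : ℤ_[p]) ^ 1)} with hI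
  have hY : (X : Polynomial ℤ_[p]) - C a ∈ I := Ideal.subset_span (by simp)
  have hP : C ((p : ℤ_[p])) ∈ I := by
    have : C ((p : ℤ_[p]) ^ 1) ∈ I := Ideal.subset_span (by simp)
    simpa using this
  obtain ⟨h, hh⟩ := frob_decomp a
  have hp1 : p - 1 + 1 = p := Nat.succ_pred_eq_of_pos hp.out.pos
  have hpow : I ^ (p - 1) * I = I ^ p := by rw [← pow_succ, hp1]
  have t1 : C ((p : ℤ_[p])) ^ (p - 1) * (X - C a) ^ p ∈ I ^ p :=
    Ideal.mul_mem_left _ _ (Ideal.pow_mem_pow hY p)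
  have t2 : C ((p : ℤ_[p])) ^ (p - 1) * (X - C a) ∈ I ^ p :=
    hpow ▸ Ideal.mul_mem_mul (Ideal.pow_mem_pow hP (p - 1)) hY
  have t3 : C ((p : ℤ_[p])) ^ p * h ∈ I ^ p :=
    Ideal.mul_mem_right h _ (Ideal.pow_mem_pow hP p)
  have e : C ((p : ℤ_[p]) ^ (p - 1)) * ((X - C a) ^ p - (X - C a) + C (p : ℤ_[p]) * h)
      = C ((p : ℤ_[p])) ^ (p - 1) * (X - C a) ^ p - C ((p : ℤ_[p])) ^ (p - 1) * (X - C a)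
        + C ((p : ℤ_[p])) ^ p * h := by
    rw [C_pow, show C ((p : ℤ_[p])) ^ p = C ((p : ℤ_[p])) ^ (p - 1) * C (p : ℤ_[p]) by
      rw [← pow_succ, hp1]]
    ring
  rw [smul_eq_C_mul, hh, e]
  exact Ideal.add_mem _ (Ideal.sub_mem _ t1 t2) t3

lemma natDegree_g_le : ((X : Polynomial ℤ_[p]) ^ p - X).natDegree ≤ p := by
  refine le_trans (natDegree_sub_le _ _) ?_
  simp [natDegree_X_pow, natDegree_X, hp.out.one_lt.le]

lemma reflect_g : reflect p ((X : Polynomial ℤ_[p]) ^ p - X) = 1 - X ^ (p - 1) := by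
  have h1 : reflect p ((X : Polynomial ℤ_[p]) ^ p) = X ^ (0 : ℕ) := by
    rw [reflect_monomial, revAt_le le_rfl, Nat.sub_self]
  have h2 : reflect p ((X : Polynomial ℤ_[p])) = X ^ (p - 1) := by
    have := reflect_monomial p 1 (R := ℤ_[p])
    rw [pow_one, revAt_le hp.out.one_lt.le] at this
    exact this
  rw [reflect_sub, h1, h2, pow_zero]

lemma reflect_gk (k : ℕ) :
    reflect (k * p) (((X : Polynomial ℤ_[p]) ^ p - X) ^ k) = (1 - X ^ (p - 1)) ^ k := by
  induction k with
  | zero => simp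
  | succ k ih =>
      have hb : (((X : Polynomial ℤ_[p]) ^ p - X) ^ k).natDegree ≤ k * p :=
        le_trans (natDegree_pow_le) (Nat.mul_le_mul_left _ natDegree_g_le)
      rw [pow_succ, Nat.succ_mul, reflect_mul _ _ hb natDegree_g_le, ih, reflect_g,
        ← pow_succ]

lemma reflect_eq_aux (k : ℕ) (c : ℤ_[p]) :
    reflect (2 * (k * p)) (c • ((X : Polynomial ℤ_[p]) ^ p - X) ^ k)
      = (-(X ^ (p - 1))) ^ k * (c • ((X : Polynomial ℤ_[p]) ^ p - X) ^ k) := by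
  have hp1 : p - 1 + 1 = p := Nat.succ_pred_eq_of_pos hp.out.pos
  have hb : (((X : Polynomial ℤ_[p]) ^ p - X) ^ k).natDegree ≤ k * p :=
    le_trans (natDegree_pow_le) (Nat.mul_le_mul_left _ natDegree_g_le)
  have hone : reflect (k * p) (1 : Polynomial ℤ_[p]) = X ^ (k * p) := by
    have := reflect_C_mul_X_pow (k * p) 0 (c := (1 : ℤ_[p]))
    simpa [revAt_le (Nat.zero_le _)] using this
  have hsplit : reflect (2 * (k * p)) (((X : Polynomial ℤ_[p]) ^ p - X) ^ k)
      = (1 - X ^ (p - 1)) ^ k * X ^ (k * p) := by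
    rw [two_mul, ← mul_one ((((X : Polynomial ℤ_[p]) ^ p - X) ^ k)),
      reflect_mul _ _ hb (by simp), reflect_gk, hone]
  have hfac : ((1 : Polynomial ℤ_[p]) - X ^ (p - 1)) * X ^ p
      = (-(X ^ (p - 1))) * ((X : Polynomial ℤ_[p]) ^ p - X) := by
    have hx : (X : Polynomial ℤ_[p]) ^ (p - 1) * X = X ^ p := by
      rw [← pow_succ, hp1]
    linear_combination -hx
  have hXkp : (X : Polynomial ℤ_[p]) ^ (k * p) = (X ^ p) ^ k := by
    rw [← pow_mul, mul_comm]
  rw [smul_eq_C_mul, reflect_C_mul, hsplit, hXkp, ← mul_pow, hfac, mul_pow]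
  ring

end Aux

theorem pow_mul_frobenius_poly_mem_Snd (p : ℕ) [Fact p.Prime] (k : ℕ) (hk : 1 ≤ k) :
    (p : ℤ_[p]) ^ (k * (p - 1)) • ((X : Polynomial ℤ_[p]) ^ p - X) ^ k ∈
      Snd p 1 (k * p) := by
  constructor
  · refine le_trans (natDegree_smul_le _ _) (le_trans natDegree_pow_le ?_)
    calc k * ((X : Polynomial ℤ_[p]) ^ p - X).natDegree
        ≤ k * p := Nat.mul_le_mul_left _ natDegree_g_le
      _ ≤ 2 * (k * p) := Nat.le_mul_of_pos_left _ two_pos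
  · intro a
    have hmem : (p : ℤ_[p]) ^ (k * (p - 1)) • ((X : Polynomial ℤ_[p]) ^ p - X) ^ k
        ∈ (Ideal.span {X - C a, C ((p : ℤ_[p]) ^ 1)}) ^ (k * p) := by
      have h1 := Ideal.pow_mem_pow (key a) k
      rw [_root_.smul_pow, ← pow_mul, ← pow_mul, mul_comm (p - 1) k, mul_comm p k] at h1
      exact h1
    refine ⟨hmem, ?_⟩
    rw [reflect_eq_aux]
    exact Ideal.mul_mem_left _ _ hmem

end
end
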